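/- Conjugate symmetry of the full propagator: if B satisfies B(−s_f, −s_i) = conj(B(s_i, s_f)) for all s_i ≤ s_f, H_s is Hermitian, W_s is Hermitian, and O_s is Hermitian, then each term of the Dyson series for G(s_i, s_f), namely i^m ∫_{s_i≤s≤s_f} (−1)^{#{s<0}} U^{(0)}(s_i, s, s_f) L_b(s) ds, satisfies (term for (−s_f, −s_i)) = (term for (s_i, s_f))^†. In particular, the truncated full propagator satisfies G(−s_f, −s_i) = G(s_i, s_f)^†. -/

import Mathlib

open MeasureTheory
open scoped Matrix

/-- A perfect pairing of `{1,...,m}`. -/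
def IsPairing {m : ℕ} (P : Finset (Fin m × Fin m)) : Prop :=
  (∀ p ∈ P, p.1 < p.2) ∧ ∀ x : Fin m, ∃! p, p ∈ P ∧ (x = p.1 ∨ x = p.2)

open scoped Classical in
/-- The set `Q(s_1,...,s_m)` of perfect pairings of indices. -/
noncomputable def pairings (m : ℕ) : Finset (Finset (Fin m × Fin m)) :=
  Finset.univ.filter IsPairing

/-- The bath influence functional (Wick pairing sum). -/
noncomputable def Lb {m : ℕ} (B : ℝ → ℝ → ℂ) (s : Fin m → ℝ) : ℂ :=
  ∑ P ∈ pairings m, ∏ p ∈ P, B (s p.1) (s p.2)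

/-- The bare system propagator `G_s^{(0)}(s_i,s_f)`. -/
noncomputable def Gs0 (Hs Os : Matrix (Fin 2) (Fin 2) ℂ) (si sf : ℝ) :
    Matrix (Fin 2) (Fin 2) ℂ :=
  if sf < 0 then NormedSpace.exp ((-Complex.I * ((sf : ℂ) - si)) • Hs)
  else if 0 ≤ si then NormedSpace.exp ((-Complex.I * ((si : ℂ) - sf)) • Hs)
  else NormedSpace.exp ((Complex.I * sf) • Hs) * Os *
    NormedSpace.exp ((Complex.I * si) • Hs)

/-- `𝒰^{(0)}(lo, s_1,...,s_m, hi) = G_s^{(0)}(s_m,hi) W_s ⋯ W_s G_s^{(0)}(lo,s_1)`. -/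
noncomputable def U0 (Hs Ws Os : Matrix (Fin 2) (Fin 2) ℂ) :
    List ℝ → ℝ → ℝ → Matrix (Fin 2) (Fin 2) ℂ
  | [], lo, hi => Gs0 Hs Os lo hi
  | x :: rest, lo, hi => U0 Hs Ws Os rest x hi * Ws * Gs0 Hs Os lo x

/-- The ordered simplex `{a ≤ s_1 ≤ ... ≤ s_m ≤ b}`. -/
def simplexSet (m : ℕ) (a b : ℝ) : Set (Fin m → ℝ) :=
  {s | Monotone s ∧ ∀ i, a ≤ s i ∧ s i ≤ b}

/-- The number of negative components of `s`. -/
noncomputable def negCount {m : ℕ} (s : Fin m → ℝ) : ℕ :=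
  (Finset.univ.filter fun i => s i < 0).card

/-- The `m`-th term of the Dyson series for the full propagator `G(s_i,s_f)`:
`i^m ∫_{s_i ≤ s ≤ s_f} (−1)^{#{s<0}} 𝒰^{(0)}(s_i,s,s_f) L_b(s) ds` (entrywise integral). -/
noncomputable def dysonTerm (Hs Ws Os : Matrix (Fin 2) (Fin 2) ℂ) (B : ℝ → ℝ → ℂ)
    (m : ℕ) (si sf : ℝ) : Matrix (Fin 2) (Fin 2) ℂ :=
  Matrix.of fun a c =>
    ∫ s in simplexSet m si sf,
      Complex.I ^ m * (-1 : ℂ) ^ negCount s * Lb B s * (U0 Hs Ws Os (List.ofFn s) si sf) a c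

open scoped Classical in
/-- The full propagator truncated at order `M`. -/
noncomputable def fullPropagator (Hs Ws Os : Matrix (Fin 2) (Fin 2) ℂ) (B : ℝ → ℝ → ℂ)
    (M : ℕ) (si sf : ℝ) : Matrix (Fin 2) (Fin 2) ℂ :=
  Gs0 Hs Os si sf +
    ∑ m ∈ (Finset.range (M + 1)).filter (fun m => Even m ∧ 2 ≤ m),
      dysonTerm Hs Ws Os B m si sf

/-! Time reversal `s ↦ (-s_m, …, -s_1)` maps the simplex over `[s_i, s_f]` measure-preservingly
onto the simplex over `[-s_f, -s_i]`, and it conjugates the integrand pointwise. For Hermitian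
`H_s`, `O_s` every bare propagator between nonzero times satisfies
`G_s^{(0)}(-b, -a) = G_s^{(0)}(a, b)†`, so with `W_s` Hermitian the reversed product `U^{(0)}` is
the adjoint of the original one. Reversing each pair of a pairing and using
`B(-s_f, -s_i) = conj B(s_i, s_f)` turns `L_b` into its conjugate. Off the null set where a time
vanishes, the reflection has `m - #{s < 0}` negative times, and this is exactly what turns
`i^m (-1)^{#{s < 0}}` into its conjugate. -/

open Matrix

section Propagator

variable {Hs Ws Os : Matrix (Fin 2) (Fin 2) ℂ}

lemma Matrix.IsHermitian.conjTranspose_exp_smul {n : Type*} [Fintype n] [DecidableEq n]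
    {H : Matrix n n ℂ} (hH : H.IsHermitian) (c : ℂ) :
    (NormedSpace.exp (c • H))ᴴ = NormedSpace.exp (starRingEnd ℂ c • H) := by
  rw [← exp_conjTranspose, conjTranspose_smul, hH.eq]
  rfl

lemma Gs0_neg_neg (hH : Hs.IsHermitian) (hO : Os.IsHermitian) {si sf : ℝ} (h : si ≤ sf)
    (hsi : si ≠ 0) (hsf : sf ≠ 0) : Gs0 Hs Os (-sf) (-si) = (Gs0 Hs Os si sf)ᴴ := by
  rcases hsf.lt_or_gt with hsf0 | hsf0
  · rw [Gs0, Gs0, if_neg (by linarith), if_pos (by linarith), if_pos hsf0,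
      hH.conjTranspose_exp_smul]
    congr 2
    simp only [Complex.ofReal_neg, map_neg, map_mul, map_sub, Complex.conj_I, Complex.conj_ofReal]
    ring
  rcases hsi.lt_or_gt with hsi0 | hsi0
  · rw [Gs0, Gs0, if_neg (by linarith), if_neg (by linarith), if_neg (by linarith),
      if_neg (by linarith), conjTranspose_mul, conjTranspose_mul, hH.conjTranspose_exp_smul,
      hH.conjTranspose_exp_smul, hO.eq, mul_assoc]
    congr 3 <;> simp
  · rw [Gs0, Gs0, if_pos (by linarith), if_neg (by linarith), if_pos hsi0.le,
      hH.conjTranspose_exp_smul]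
    congr 2
    simp only [Complex.ofReal_neg, map_neg, map_mul, map_sub, Complex.conj_I, Complex.conj_ofReal]
    ring

lemma U0_append (l : List ℝ) (y lo hi : ℝ) :
    U0 Hs Ws Os (l ++ [y]) lo hi = Gs0 Hs Os y hi * Ws * U0 Hs Ws Os l lo y := by
  induction l generalizing lo with
  | nil => rfl
  | cons x rest ih => simp only [List.cons_append, U0, ih, mul_assoc]

lemma U0_map_neg_reverse (hH : Hs.IsHermitian) (hW : Ws.IsHermitian) (hO : Os.IsHermitian)
    {l : List ℝ} {lo hi : ℝ} (hl : l.Pairwise (· ≤ ·)) (hbd : ∀ x ∈ l, lo ≤ x ∧ x ≤ hi)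
    (hle : lo ≤ hi) (hlo : lo ≠ 0) (hhi : hi ≠ 0) (hz : ∀ x ∈ l, x ≠ 0) :
    U0 Hs Ws Os (l.reverse.map Neg.neg) (-hi) (-lo) = (U0 Hs Ws Os l lo hi)ᴴ := by
  induction l generalizing lo with
  | nil => exact Gs0_neg_neg hH hO hle hlo hhi
  | cons x rest ih =>
    obtain ⟨hxlo, hxhi⟩ := hbd x List.mem_cons_self
    have hx : x ≠ 0 := hz x List.mem_cons_self
    have hrest : ∀ y ∈ rest, x ≤ y ∧ y ≤ hi := fun y hy =>
      ⟨List.rel_of_pairwise_cons hl hy, (hbd y (List.mem_cons_of_mem _ hy)).2⟩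
    rw [List.reverse_cons, List.map_append, List.map_singleton, U0_append, U0,
      conjTranspose_mul, conjTranspose_mul, hW.eq, ← Gs0_neg_neg hH hO hxlo hlo hx,
      ← ih hl.of_cons hrest hxhi hx fun y hy => hz y (List.mem_cons_of_mem _ hy), mul_assoc]

end Propagator

section Reflection

variable {m : ℕ}

def reflect (s : Fin m → ℝ) : Fin m → ℝ := fun i => -s i.rev

@[simp]
lemma reflect_apply (s : Fin m → ℝ) (i : Fin m) : reflect s i = -s i.rev := rfl

lemma reflect_involutive : Function.Involutive (reflect (m := m)) := fun s => by
  ext i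
  simp

lemma Monotone.reflect {s : Fin m → ℝ} (hs : Monotone s) : Monotone (reflect s) :=
  fun _ _ hij => neg_le_neg (hs (Fin.rev_le_rev.2 hij))

lemma reflect_mem_simplexSet {s : Fin m → ℝ} {a b : ℝ} (hs : s ∈ simplexSet m a b) :
    reflect s ∈ simplexSet m (-b) (-a) :=
  ⟨hs.1.reflect, fun i => ⟨neg_le_neg (hs.2 i.rev).2, neg_le_neg (hs.2 i.rev).1⟩⟩

lemma reflect_mem_simplexSet_iff {s : Fin m → ℝ} {a b : ℝ} :
    reflect s ∈ simplexSet m (-b) (-a) ↔ s ∈ simplexSet m a b := by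
  refine ⟨fun hs => ?_, reflect_mem_simplexSet⟩
  simpa only [reflect_involutive s, neg_neg] using reflect_mem_simplexSet hs

lemma negCount_reflect_add {s : Fin m → ℝ} (hz : ∀ i, s i ≠ 0) :
    negCount (reflect s) + negCount s = m := by
  have hpos : (Finset.univ.filter fun i => reflect s i < 0) =
      (Finset.univ.filter fun i => ¬s i < 0).map Fin.revPerm.toEmbedding := by
    ext i
    simp [Fin.revPerm, (hz i.rev).symm.le_iff_lt]
  rw [negCount, negCount, hpos, Finset.card_map, add_comm]
  simpa using Finset.card_filter_add_card_filter_not (s := Finset.univ) (fun i => s i < 0)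

lemma List.ofFn_comp_rev {α : Type*} (f : Fin m → α) :
    List.ofFn (f ∘ Fin.rev) = (List.ofFn f).reverse := by
  refine List.ext_getElem (by simp) fun i h₁ h₂ => ?_
  simp only [List.getElem_ofFn, List.getElem_reverse, List.length_ofFn, Function.comp_apply]
  congr 1
  ext
  simp only [Fin.val_rev]
  omega

lemma ofFn_reflect (s : Fin m → ℝ) :
    List.ofFn (reflect s) = (List.ofFn s).reverse.map Neg.neg := by
  rw [← List.ofFn_comp_rev, List.map_ofFn]
  rfl

end Reflection

section Pairing

variable {m : ℕ}

def reversePair (p : Fin m × Fin m) : Fin m × Fin m := (p.2.rev, p.1.rev)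

lemma reversePair_involutive : Function.Involutive (reversePair (m := m)) := fun p => by
  simp [reversePair]

lemma mem_reversePair_iff {p : Fin m × Fin m} {x : Fin m} :
    (x = (reversePair p).1 ∨ x = (reversePair p).2) ↔ (x.rev = p.1 ∨ x.rev = p.2) := by
  simp only [reversePair, ← Fin.rev_eq_iff]
  exact or_comm

lemma IsPairing.image_reversePair {P : Finset (Fin m × Fin m)} (hP : IsPairing P) :
    IsPairing (P.image reversePair) := by
  refine ⟨Finset.forall_mem_image.2 fun p hp => Fin.rev_lt_rev.2 (hP.1 p hp), fun x => ?_⟩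
  obtain ⟨p, ⟨hpP, hxp⟩, huniq⟩ := hP.2 x.rev
  refine ⟨reversePair p, ⟨Finset.mem_image_of_mem _ hpP, mem_reversePair_iff.2 hxp⟩, ?_⟩
  rintro _ ⟨hq, hxq⟩
  obtain ⟨q, hqP, rfl⟩ := Finset.mem_image.1 hq
  rw [huniq q ⟨hqP, mem_reversePair_iff.1 hxq⟩]

lemma image_reversePair_mem_pairings {P : Finset (Fin m × Fin m)} (hP : P ∈ pairings m) :
    P.image reversePair ∈ pairings m := by
  classical
  simp only [pairings, Finset.mem_filter, Finset.mem_univ, true_and] at hP ⊢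
  exact hP.image_reversePair

lemma image_reversePair_image_reversePair (P : Finset (Fin m × Fin m)) :
    (P.image reversePair).image reversePair = P := by
  classical
  rw [Finset.image_image, reversePair_involutive.comp_self, Finset.image_id]

lemma Lb_reflect {B : ℝ → ℝ → ℂ}
    (hB : ∀ si sf : ℝ, si ≤ sf → B (-sf) (-si) = starRingEnd ℂ (B si sf))
    {s : Fin m → ℝ} (hs : Monotone s) :
    Lb B (reflect s) = starRingEnd ℂ (Lb B s) := by
  rw [Lb, Lb, map_sum]
  refine Finset.sum_nbij' (·.image reversePair) (·.image reversePair)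
    (fun _ => image_reversePair_mem_pairings) (fun _ => image_reversePair_mem_pairings)
    (fun P _ => image_reversePair_image_reversePair P)
    (fun P _ => image_reversePair_image_reversePair P) fun P hP => ?_
  rw [Finset.prod_image fun _ _ _ _ h => reversePair_involutive.injective h, map_prod]
  refine Finset.prod_congr rfl fun p hp => ?_
  have hlt : p.1 < p.2 := by
    simp only [pairings, Finset.mem_filter] at hP
    exact hP.2.1 p hp
  simp only [reversePair, reflect_apply]
  exact hB _ _ (hs (Fin.rev_le_rev.2 hlt.le))

end Pairing

section Integral

variable {m : ℕ}

def reflectEquiv (m : ℕ) : (Fin m → ℝ) ≃ᵐ (Fin m → ℝ) :=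
  (MeasurableEquiv.piCongrLeft (fun _ => ℝ) Fin.revPerm).trans (MeasurableEquiv.neg _)

lemma coe_reflectEquiv : ⇑(reflectEquiv m) = reflect := by
  ext s i
  simpa [reflectEquiv] using
    MeasurableEquiv.piCongrLeft_apply_apply (β := fun _ => ℝ) Fin.revPerm s i.rev

lemma measurePreserving_reflectEquiv (m : ℕ) : MeasurePreserving (reflectEquiv m) :=
  (Measure.measurePreserving_neg _).comp
    (volume_measurePreserving_piCongrLeft (fun _ => ℝ) Fin.revPerm)

lemma measurableSet_simplexSet (m : ℕ) (a b : ℝ) : MeasurableSet (simplexSet m a b) := by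
  simp only [simplexSet, Set.ofPred_and, Set.ofPred_forall]
  refine IsClosed.measurableSet (isClosed_monotone.inter (isClosed_iInter fun i => ?_))
  exact (isClosed_le continuous_const (continuous_apply i)).inter
    (isClosed_le (continuous_apply i) continuous_const)

lemma ae_forall_ne_zero (m : ℕ) : ∀ᵐ s : Fin m → ℝ, ∀ i, s i ≠ 0 :=
  ae_all_iff.2 fun i => compl_mem_ae_iff.2 (Measure.pi_hyperplane _ i 0)

lemma setIntegral_simplexSet_reflect {f g : (Fin m → ℝ) → ℂ} {a b : ℝ}
    (hfg : ∀ s ∈ simplexSet m a b, (∀ i, s i ≠ 0) → f (reflect s) = starRingEnd ℂ (g s)) :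
    ∫ s in simplexSet m (-b) (-a), f s = starRingEnd ℂ (∫ s in simplexSet m a b, g s) := by
  have hpre : reflectEquiv m ⁻¹' simplexSet m (-b) (-a) = simplexSet m a b := by
    ext s
    simp [coe_reflectEquiv, reflect_mem_simplexSet_iff]
  rw [← integral_conj, ← (measurePreserving_reflectEquiv m).setIntegral_preimage_emb
    (MeasurableEquiv.measurableEmbedding _), hpre]
  refine setIntegral_congr_ae (measurableSet_simplexSet m a b) ?_
  filter_upwards [ae_forall_ne_zero m] with s hz hs
  rw [coe_reflectEquiv]
  exact hfg s hs hz

end Integral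

lemma Complex.I_pow_mul_neg_one_pow_of_add_eq {k n m : ℕ} (h : k + n = m) :
    Complex.I ^ m * (-1) ^ k = starRingEnd ℂ (Complex.I ^ m * (-1) ^ n) := by
  have hsq : ((-1 : ℂ) ^ n) ^ 2 = 1 := by
    rw [← pow_mul, mul_comm, pow_mul, neg_one_sq, one_pow]
  subst h
  simp only [map_mul, map_pow, Complex.conj_I, map_neg, map_one, neg_pow Complex.I]
  linear_combination (-(Complex.I ^ (k + n) * (-1) ^ k)) * hsq

section Dyson

variable {Hs Ws Os : Matrix (Fin 2) (Fin 2) ℂ} {B : ℝ → ℝ → ℂ} {si sf : ℝ}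

lemma U0_ofFn_reflect (hH : Hs.IsHermitian) (hW : Ws.IsHermitian) (hO : Os.IsHermitian)
    {m : ℕ} {s : Fin m → ℝ} (hs : s ∈ simplexSet m si sf) (hz : ∀ i, s i ≠ 0) (h : si ≤ sf)
    (hsi : si ≠ 0) (hsf : sf ≠ 0) :
    U0 Hs Ws Os (List.ofFn (reflect s)) (-sf) (-si) = (U0 Hs Ws Os (List.ofFn s) si sf)ᴴ := by
  rw [ofFn_reflect]
  refine U0_map_neg_reverse hH hW hO (List.sortedLE_ofFn_iff.2 hs.1).pairwise ?_ h hsi hsf ?_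
  all_goals simp only [List.mem_ofFn, forall_exists_index, forall_apply_eq_imp_iff]
  exacts [hs.2, hz]

lemma dysonTerm_neg_neg (hH : Hs.IsHermitian) (hW : Ws.IsHermitian) (hO : Os.IsHermitian)
    (hB : ∀ si sf : ℝ, si ≤ sf → B (-sf) (-si) = starRingEnd ℂ (B si sf))
    (h : si ≤ sf) (hsi : si ≠ 0) (hsf : sf ≠ 0) (m : ℕ) :
    dysonTerm Hs Ws Os B m (-sf) (-si) = (dysonTerm Hs Ws Os B m si sf)ᴴ := by
  ext a c
  rw [dysonTerm, dysonTerm, conjTranspose_apply, of_apply, of_apply, ← starRingEnd_apply]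
  refine setIntegral_simplexSet_reflect fun s hs hz => ?_
  rw [Lb_reflect hB hs.1, U0_ofFn_reflect hH hW hO hs hz h hsi hsf, conjTranspose_apply,
    Complex.I_pow_mul_neg_one_pow_of_add_eq (negCount_reflect_add hz)]
  simp only [map_mul, starRingEnd_apply]

end Dyson

/-- Conjugate symmetry: if `B(−s_f,−s_i) = conj B(s_i,s_f)` and `H_s, W_s, O_s` are
Hermitian, then each Dyson term satisfies
`(term at (−s_f,−s_i)) = (term at (s_i,s_f))†`; in particular the truncated full
propagator satisfies `G(−s_f,−s_i) = G(s_i,s_f)†`. -/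
theorem dyson_conjugate_symmetry (Hs Ws Os : Matrix (Fin 2) (Fin 2) ℂ)
    (hH : Hs.IsHermitian) (hW : Ws.IsHermitian) (hO : Os.IsHermitian)
    (B : ℝ → ℝ → ℂ) (hB : ∀ si sf : ℝ, si ≤ sf → B (-sf) (-si) = starRingEnd ℂ (B si sf))
    (si sf : ℝ) (h : si ≤ sf) (hsi : si ≠ 0) (hsf : sf ≠ 0) (M : ℕ) :
    (∀ m : ℕ, dysonTerm Hs Ws Os B m (-sf) (-si) = (dysonTerm Hs Ws Os B m si sf)ᴴ) ∧
    fullPropagator Hs Ws Os B M (-sf) (-si) = (fullPropagator Hs Ws Os B M si sf)ᴴ := by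
  have hterm := dysonTerm_neg_neg hH hW hO hB h hsi hsf
  refine ⟨hterm, ?_⟩
  simp only [fullPropagator, conjTranspose_add, conjTranspose_sum, Gs0_neg_neg hH hO h hsi hsf,
    hterm]
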